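/- arXiv:1304.4263 — 4 statements merged into one kernel-verified Lean document; each statement's English description precedes it below -/
import Mathlib

section
/- Let X be a metric space with asymptotic dimension at most k, and let G be a finite group of order at most n acting on X by isometries. Then the quotient metric space G\X has asymptotic dimension at most n(k+1) - 1. -/
/-- `AsdimCoverLE d m`: the space with distance function `d` has asymptotic dimension at
most `m`, i.e. for every `R > 0` there is a uniformly bounded cover with Lebesgue number at
least `R` in which every point lies in at most `m + 1` members. -/
def AsdimCoverLE {α : Type*} (d : α → α → ℝ) (m : ℕ) : Prop :=
  ∀ R : ℝ, 0 < R → ∃ U : Set (Set α),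
    (∃ B : ℝ, ∀ u ∈ U, ∀ x ∈ u, ∀ y ∈ u, d x y ≤ B) ∧
    (∀ x : α, ∃ u ∈ U, {y | d x y < R} ⊆ u) ∧
    (∀ x : α, {u | u ∈ U ∧ x ∈ u}.Finite ∧ {u | u ∈ U ∧ x ∈ u}.ncard ≤ m + 1)

/-- Let `X` be a metric space with asymptotic dimension at most `k`, and let
`G` be a finite group of order at most `n` acting on `X` by isometries.  Then the quotient
metric space `G\X` (with `d(xb,yb) = min_g d(x, g•y)`) has asymptotic dimension at most
`n(k+1) - 1`. -/
theorem asdim_quotient_le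
    (G X : Type*) [Group G] [Finite G] [MetricSpace X] [MulAction G X]
    (hiso : ∀ g : G, Isometry (fun x : X => g • x))
    (n k : ℕ) (hn : 0 < n) (hcard : Nat.card G ≤ n)
    (hX : AsdimCoverLE (fun x y : X => dist x y) k)
    (D : Quotient (MulAction.orbitRel G X) → Quotient (MulAction.orbitRel G X) → ℝ)
    (hD : ∀ x y : X, D (Quotient.mk _ x) (Quotient.mk _ y) = ⨅ g : G, dist x (g • y)) :
    AsdimCoverLE D (n * (k + 1) - 1) := by
  classical
  haveI : Fintype G := Fintype.ofFinite G
  intro R hR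
  obtain ⟨U, ⟨B, hB⟩, hLeb, hmult⟩ := hX R hR
  set π : X → Quotient (MulAction.orbitRel G X) := Quotient.mk _ with hπ
  refine ⟨(fun u => π '' u) '' U, ⟨B, ?_⟩, ?_, ?_⟩
  · rintro v ⟨u, hu, rfl⟩ xb ⟨x, hx, rfl⟩ yb ⟨y, hy, rfl⟩
    rw [hD x y]
    have hbdd : BddBelow (Set.range fun g : G => dist x (g • y)) :=
      ⟨0, by rintro _ ⟨g, rfl⟩; exact dist_nonneg⟩
    calc (⨅ g : G, dist x (g • y)) ≤ dist x ((1 : G) • y) := ciInf_le hbdd 1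
      _ = dist x y := by rw [one_smul]
      _ ≤ B := hB u hu x hx y hy
  · intro xb
    obtain ⟨x, rfl⟩ := xb.exists_rep
    obtain ⟨u, hu, hball⟩ := hLeb x
    refine ⟨π '' u, ⟨u, hu, rfl⟩, ?_⟩
    rintro yb hyb
    obtain ⟨y, rfl⟩ := yb.exists_rep
    rw [Set.mem_setOf_eq, hD] at hyb
    obtain ⟨g, hg⟩ := exists_lt_of_ciInf_lt hyb
    exact ⟨g • y, hball hg, Quotient.sound (MulAction.mem_orbit y g)⟩
  · intro xb
    obtain ⟨x, rfl⟩ := xb.exists_rep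
    have hT : ∀ g : G, {u | u ∈ U ∧ g • x ∈ u}.Finite ∧
        {u | u ∈ U ∧ g • x ∈ u}.ncard ≤ k + 1 := fun g => hmult (g • x)
    set S : Set (Set X) := ⋃ g : G, {u | u ∈ U ∧ g • x ∈ u} with hS
    have hSfin : S.Finite := Set.finite_iUnion fun g => (hT g).1
    have hScard : S.ncard ≤ n * (k + 1) := by
      have heq : S = ↑(Finset.univ.biUnion fun g : G => ((hT g).1.toFinset)) := by
        ext u
        simp [hS, Set.mem_iUnion]
      rw [heq, Set.ncard_coe_finset]
      calc (Finset.univ.biUnion fun g : G => ((hT g).1.toFinset)).card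
          ≤ Finset.univ.card * (k + 1) := by
            apply Finset.card_biUnion_le_card_mul
            intro g _
            rw [← Set.ncard_coe_finset]
            simpa using (hT g).2
        _ ≤ n * (k + 1) := by
            apply Nat.mul_le_mul_right
            simpa [Nat.card_eq_fintype_card] using hcard
    have hsub : {v | v ∈ (fun u => π '' u) '' U ∧ π x ∈ v} ⊆ (fun u => π '' u) '' S := by
      rintro v ⟨⟨u, hu, rfl⟩, hx⟩
      obtain ⟨z, hz, hzx⟩ := hx
      obtain ⟨g, hg⟩ := Quotient.exact hzx
      refine ⟨u, ?_, rfl⟩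
      exact Set.mem_iUnion.2 ⟨g, hu, by rw [show g • x = z from hg]; exact hz⟩
    have hfin : {v | v ∈ (fun u => π '' u) '' U ∧ π x ∈ v}.Finite :=
      (hSfin.image _).subset hsub
    refine ⟨hfin, ?_⟩
    calc {v | v ∈ (fun u => π '' u) '' U ∧ π x ∈ v}.ncard
        ≤ ((fun u => π '' u) '' S).ncard := Set.ncard_le_ncard hsub (hSfin.image _)
      _ ≤ S.ncard := Set.ncard_image_le hSfin
      _ ≤ n * (k + 1) := hScard
      _ = n * (k + 1) - 1 + 1 := by
          have : 1 ≤ n * (k + 1) := Nat.one_le_iff_ne_zero.2 (by positivity)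
          omega
end

section
/- Let X be a metric space that decomposes over a class 𝒞 of metric spaces in the following strong sense: for every r > 0 there is a decomposition X = U ∪ V with U = ⋃_{i∈I} U_i and V = ⋃_{j∈J} V_j where d(U_i, U_{i'}) > r for i ≠ i' and d(V_j, V_{j'}) > r for j ≠ j'. Suppose additionally a finite group G acts on X by isometries permuting the pieces appropriately so that U, V and the families {U_i}, {V_j} are G-invariant (G permutes the indices). Then the quotient G\X decomposes as G\U ∪ G\V where G\U is the union of the images of the U_i, any two distinct images being at distance > r, and similarly for V. -/
open scoped Pointwise


private lemma key_aux {G X : Type*} [Group G] [Finite G] [MetricSpace X] [MulAction G X]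
    (r : ℝ)
    (q : X → Quotient (MulAction.orbitRel G X)) (hq : ∀ x, q x = Quotient.mk _ x)
    (D : Quotient (MulAction.orbitRel G X) → Quotient (MulAction.orbitRel G X) → ℝ)
    (hD : ∀ x y : X, D (Quotient.mk _ x) (Quotient.mk _ y) = ⨅ g : G, dist x (g • y))
    {K : Type*} (W : K → Set X)
    (hdisj : ∀ k k', k ≠ k' → ∀ x ∈ W k, ∀ y ∈ W k', r < dist x y)
    (hperm : ∀ (g : G) (k : K), ∃ k', g • W k = W k') :
    ∀ k k', q '' W k = q '' W k' ∨ ∀ a ∈ q '' W k, ∀ b ∈ q '' W k', r < D a b := by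
  classical
  have qsmul : ∀ (g : G) (x : X), q (g • x) = q x := by
    intro g x
    rw [hq, hq]
    exact Quotient.sound (MulAction.mem_orbit x g)
  have himg : ∀ (g : G) (s : Set X), q '' (g • s) = q '' s := by
    intro g s
    ext a
    constructor
    · rintro ⟨-, ⟨x, hx, rfl⟩, rfl⟩
      exact ⟨x, hx, (qsmul g x).symm⟩
    · rintro ⟨x, hx, rfl⟩
      exact ⟨g • x, Set.smul_mem_smul_set hx, qsmul g x⟩
  haveI : Nonempty G := ⟨1⟩
  have hinf : ∀ x y : X, (∀ g : G, r < dist x (g • y)) → r < D (q x) (q y) := by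
    intro x y h
    rw [hq, hq, hD]
    obtain ⟨g0, hg0⟩ := Finite.exists_min (fun g : G => dist x (g • y))
    have heq : (⨅ g : G, dist x (g • y)) = dist x (g0 • y) :=
      le_antisymm (ciInf_le (Set.Finite.bddBelow (Set.finite_range _)) g0) (le_ciInf hg0)
    rw [heq]
    exact h g0
  intro k k'
  by_cases hex : ∃ g : G, g • W k' = W k
  · left
    obtain ⟨g, hg⟩ := hex
    rw [← hg, himg]
  · right
    rintro a ⟨x, hx, rfl⟩ b ⟨y, hy, rfl⟩
    apply hinf
    intro g
    obtain ⟨k'', hk''⟩ := hperm g k'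
    have hne : k ≠ k'' := by
      rintro rfl
      exact hex ⟨g, hk''⟩
    exact hdisj k k'' hne x hx (g • y) (hk'' ▸ Set.smul_mem_smul_set hy)

/-- Let `X = U ∪ V` be an `r`-decomposition, `U = ⋃ᵢ Uᵢ`, `V = ⋃ⱼ Vⱼ`
with the `Uᵢ` pairwise `r`-disjoint and the `Vⱼ` pairwise `r`-disjoint, and let a finite
group `G` act on `X` by isometries leaving `U`, `V` invariant and permuting the pieces.
Then in the quotient `G\X` (with metric `D(x̄,ȳ) = min_g d(x, g•y)`) we have
`G\X = (image of U) ∪ (image of V)`, the image of `U` is the union of the images of the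
`Uᵢ`, and any two of these images either coincide or are at distance `> r`; similarly
for `V`. -/
theorem decomposition_descends_to_quotient
    (G X : Type*) [Group G] [Finite G] [MetricSpace X] [MulAction G X]
    (hiso : ∀ g : G, Isometry (fun x : X => g • x))
    (r : ℝ) (hr : 0 < r)
    {I J : Type*} (U V : Set X) (Ui : I → Set X) (Vj : J → Set X)
    (hcover : U ∪ V = Set.univ)
    (hU : U = ⋃ i, Ui i) (hV : V = ⋃ j, Vj j)
    (hUdisj : ∀ i i' : I, i ≠ i' → ∀ x ∈ Ui i, ∀ y ∈ Ui i', r < dist x y)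
    (hVdisj : ∀ j j' : J, j ≠ j' → ∀ x ∈ Vj j, ∀ y ∈ Vj j', r < dist x y)
    (hUperm : ∀ (g : G) (i : I), ∃ i' : I, g • Ui i = Ui i')
    (hVperm : ∀ (g : G) (j : J), ∃ j' : J, g • Vj j = Vj j')
    (q : X → Quotient (MulAction.orbitRel G X)) (hq : ∀ x, q x = Quotient.mk _ x)
    (D : Quotient (MulAction.orbitRel G X) → Quotient (MulAction.orbitRel G X) → ℝ)
    (hD : ∀ x y : X, D (Quotient.mk _ x) (Quotient.mk _ y) = ⨅ g : G, dist x (g • y)) :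
    -- the images of `U` and `V` cover the quotient
    (q '' U ∪ q '' V = Set.univ) ∧
    -- the image of `U` is the union of the images of the pieces, which pairwise either
    -- coincide or are at distance `> r`
    (q '' U = ⋃ i, q '' Ui i) ∧
    (∀ i i' : I, q '' Ui i = q '' Ui i' ∨
      ∀ a ∈ q '' Ui i, ∀ b ∈ q '' Ui i', r < D a b) ∧
    -- similarly for `V`
    (q '' V = ⋃ j, q '' Vj j) ∧
    (∀ j j' : J, q '' Vj j = q '' Vj j' ∨
      ∀ a ∈ q '' Vj j, ∀ b ∈ q '' Vj j', r < D a b) := by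
  refine ⟨?_, ?_, key_aux r q hq D hD Ui hUdisj hUperm, ?_,
    key_aux r q hq D hD Vj hVdisj hVperm⟩
  · rw [← Set.image_union, hcover]
    apply Set.eq_univ_of_forall
    intro a
    induction a using Quotient.inductionOn with
    | h x => exact ⟨x, trivial, hq x⟩
  · rw [hU, Set.image_iUnion]
  · rw [hV, Set.image_iUnion]
end

section
/- Let Γ be a group that is the direct union of subgroups Γ_i, equipped with a left-invariant metric with finite balls, let Γ ⊴ Γ', H ≤ Γ' finite with |H| ≤ k, and fix r > 0. Choose i such that B_{2(k+1)r}(e) ∩ Γ ⊆ Γ_i. Let Z_H := ⟨B_r(e) ∩ HΓ⟩ (subgroup of Γ' generated by the ball intersected with HΓ). Then Z_H ∩ Γ ≤ Γ_i. -/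
/-!
Write elements of `Z_H ∩ Γ` as words in the symmetric set `S = B_r(e) ∩ HΓ`. A word of length
at most `k` lies in a small ball of `Γ`, hence in `Γᵢ`. In a longer word, two of the prefixes
`p₀, …, p_k` lie in the same coset of `Γ`, since the prefixes lie in `HΓ` and `HΓ/Γ` has at most
`k` elements. If `p_a Γ = p_b Γ` with `a < b ≤ k`, then `p_b p_a⁻¹` is an element of `Γ` of
length less than `2kr`, hence of `Γᵢ`, and cutting the letters `a, …, b - 1` out of the word
leaves a shorter word whose product is still in `Γ`, which lies in `Γᵢ` by induction.
-/

open QuotientGroup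

section

variable {G : Type*} [Group G]

def GroupSeminorm.ofLeftInvariantDist (d : G → G → ℝ) (hrefl : ∀ g, d g g = 0)
    (hsymm : ∀ g h, d g h = d h g) (htri : ∀ g₁ g₂ g₃, d g₁ g₃ ≤ d g₁ g₂ + d g₂ g₃)
    (hinv : ∀ g g₁ g₂, d (g * g₁) (g * g₂) = d g₁ g₂) : GroupSeminorm G where
  toFun g := d 1 g
  map_one' := hrefl 1
  mul_le' g h := by
    calc d 1 (g * h) ≤ d 1 g + d g (g * h) := htri _ _ _
      _ = d 1 g + d 1 h := by rw [← hinv g 1 h, mul_one]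
  inv' g := by rw [← hinv g 1 g⁻¹, mul_one, mul_inv_cancel, hsymm]

theorem GroupSeminorm.apply_list_prod_le (f : GroupSeminorm G) {l : List G} {r : ℝ}
    (hl : ∀ x ∈ l, f x ≤ r) : f l.prod ≤ l.length * r := by
  induction l with
  | nil => simp
  | cons x l ih =>
    simp only [List.prod_cons, List.length_cons, Nat.cast_succ]
    linarith [map_mul_le_add f x l.prod, hl x List.mem_cons_self,
      ih fun y hy ↦ hl y (List.mem_cons_of_mem x hy)]

theorem List.prod_eq_mul_prod_take_append_drop (l : List G) (a b : ℕ) :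
    l.prod = (l.take b).prod * (l.take a).prod⁻¹ * (l.take a ++ l.drop b).prod := by
  rw [List.prod_append, ← List.prod_take_mul_prod_drop l b]
  group

theorem exists_prefix_prod_mk_eq (N : Subgroup G) [N.Normal] (H : Subgroup G) [Finite H]
    {k : ℕ} (hk : Nat.card H ≤ k) {l : List G} (hl : ∀ x ∈ l, x ∈ H ⊔ N) :
    ∃ a b, a < b ∧ b ≤ k ∧ ((l.take a).prod : G ⧸ N) = (l.take b).prod := by
  have hcard : Nat.card (H.map (mk' N)) ≤ k :=
    (Nat.card_le_card_of_surjective _ ((mk' N).subgroupMap_surjective H)).trans hk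
  have : Finite (H.map (mk' N)) := Finite.of_surjective _ ((mk' N).subgroupMap_surjective H)
  have hmaps : ∀ j ∈ (Finset.range (k + 1) : Set ℕ),
      ((l.take j).prod : G ⧸ N) ∈ (H.map (mk' N) : Set (G ⧸ N)) := by
    intro j _
    have hprefix : (l.take j).prod ∈ H ⊔ N :=
      list_prod_mem fun x hx ↦ hl x (List.mem_of_mem_take hx)
    simpa [Subgroup.map_sup] using Subgroup.mem_map_of_mem (mk' N) hprefix
  obtain ⟨a, ha, b, hb, hne, heq⟩ := Set.exists_ne_map_eq_of_ncard_lt_of_maps_to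
    (by rw [Set.ncard_coe_finset, Finset.card_range, ← Nat.card_coe_set_eq]
        exact hcard.trans_lt k.lt_succ_self)
    hmaps (Set.toFinite _)
  simp only [Finset.coe_range, Set.mem_Iio] at ha hb
  rcases lt_or_gt_of_ne hne with hab | hba
  · exact ⟨a, b, hab, by omega, heq⟩
  · exact ⟨b, a, hba, by omega, heq.symm⟩

variable (f : GroupSeminorm G) {N : Subgroup G} [N.Normal] (H : Subgroup G) [Finite H] {k : ℕ}
  (hk : Nat.card H ≤ k) {r : ℝ} (hr : 0 < r) {T : Subgroup G}
  (hT : {g | f g < 2 * (k + 1) * r} ∩ N ⊆ T)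
include hk hr hT

theorem list_prod_mem_of_mem_normal (l : List G) (hl : ∀ x ∈ l, f x < r ∧ x ∈ H ⊔ N)
    (hN : l.prod ∈ N) : l.prod ∈ T := by
  have hlen : ∀ {l' : List G}, (∀ x ∈ l', f x < r ∧ x ∈ H ⊔ N) → f l'.prod ≤ l'.length * r :=
    fun hl' ↦ f.apply_list_prod_le fun x hx ↦ (hl' x hx).1.le
  have hsmall : ∀ {g : G}, f g ≤ 2 * k * r → g ∈ N → g ∈ T := fun hg hgN ↦
    hT ⟨by simp only [Set.mem_ofPred_eq]; nlinarith, hgN⟩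
  by_cases hshort : l.length ≤ k
  · refine hsmall ?_ hN
    nlinarith [hlen hl, (Nat.cast_le (α := ℝ)).2 hshort]
  obtain ⟨a, b, hab, hbk, heq⟩ := exists_prefix_prod_mk_eq N H hk fun x hx ↦ (hl x hx).2
  have htake : ∀ j, ∀ x ∈ l.take j, f x < r ∧ x ∈ H ⊔ N := fun j x hx ↦
    hl x (List.mem_of_mem_take hx)
  have hprefix : ∀ j, f (l.take j).prod ≤ j * r := fun j ↦ by
    nlinarith [hlen (htake j), (Nat.cast_le (α := ℝ)).2 (List.length_take_le j l)]
  set u := (l.take b).prod * (l.take a).prod⁻¹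
  have huN : u ∈ N := (eq_one_iff _).mp (by rw [mk_mul, mk_inv, heq, mul_inv_cancel])
  have huT : u ∈ T := by
    refine hsmall ?_ huN
    have hak_real : (a : ℝ) ≤ k := by exact_mod_cast hab.le.trans hbk
    have hbk_real : (b : ℝ) ≤ k := by exact_mod_cast hbk
    nlinarith [map_mul_le_add f (l.take b).prod (l.take a).prod⁻¹, map_inv_eq_map f
      (l.take a).prod, hprefix a, hprefix b]
  have hsplit := l.prod_eq_mul_prod_take_append_drop a b
  have hrest : (l.take a ++ l.drop b).prod ∈ T := by
    refine list_prod_mem_of_mem_normal _ (fun x hx ↦ ?_) ?_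
    · rcases List.mem_append.mp hx with hx | hx
      exacts [hl x (List.mem_of_mem_take hx), hl x (List.mem_of_mem_drop hx)]
    · rw [← inv_mul_cancel_left u (l.take a ++ l.drop b).prod, ← hsplit]
      exact N.mul_mem (N.inv_mem huN) hN
  rw [hsplit]
  exact T.mul_mem huT hrest
termination_by l.length
decreasing_by simp only [List.length_append, List.length_take, List.length_drop]; omega

theorem closure_inter_normal_subset :
    (Subgroup.closure ({g | f g < r} ∩ (H ⊔ N : Subgroup G)) : Set G) ∩ N ⊆ T := by
  rintro z ⟨hz, hzN⟩
  rw [SetLike.mem_coe, ← Subgroup.mem_toSubmonoid, Subgroup.closure_toSubmonoid] at hz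
  obtain ⟨l, hl, rfl⟩ := Submonoid.exists_list_of_mem_closure hz
  refine list_prod_mem_of_mem_normal f H hk hr hT l (fun x hx ↦ ?_) hzN
  rcases hl x hx with ⟨hxr, hxA⟩ | ⟨hxr, hxA⟩
  · exact ⟨hxr, hxA⟩
  · exact ⟨by simpa using hxr, by simpa using hxA⟩

end

theorem generated_subgroup_inter_le_general
    (Γ' : Type*) [Group Γ'] (d : Γ' → Γ' → ℝ)
    (hrefl : ∀ γ, d γ γ = 0)
    (hsymm : ∀ γ γ'', d γ γ'' = d γ'' γ)
    (htri : ∀ γ₁ γ₂ γ₃, d γ₁ γ₃ ≤ d γ₁ γ₂ + d γ₂ γ₃)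
    (hinv : ∀ γ γ₁ γ₂, d (γ * γ₁) (γ * γ₂) = d γ₁ γ₂)
    (Γ : Subgroup Γ') (hnormal : Γ.Normal)
    (H : Subgroup Γ') [Finite H] (k : ℕ) (hk : Nat.card H ≤ k)
    (r : ℝ) (hr : 0 < r)
    (Γi : Subgroup Γ')
    (hball : {g : Γ' | d 1 g < 2 * (k + 1) * r} ∩ (Γ : Set Γ') ⊆ (Γi : Set Γ'))
    (ZH : Subgroup Γ')
    (hZH : ZH = Subgroup.closure ({g : Γ' | d 1 g < r} ∩ ((H ⊔ Γ : Subgroup Γ') : Set Γ'))) :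
    (ZH : Set Γ') ∩ (Γ : Set Γ') ⊆ (Γi : Set Γ') := by
  subst hZH
  exact closure_inter_normal_subset (GroupSeminorm.ofLeftInvariantDist d hrefl hsymm htri hinv)
    H hk hr hball

/-- Let `Γ'` be a group with a left-invariant metric with finite balls,
`Γ ⊴ Γ'` a normal subgroup which is the direct union of subgroups `Γᵢ`, `H ≤ Γ'` finite
with `|H| ≤ k`, and `r > 0`.  Choose `i` with `B_{2(k+1)r}(e) ∩ Γ ⊆ Γᵢ` and let
`Z_H := ⟨B_r(e) ∩ HΓ⟩`.  Then `Z_H ∩ Γ ≤ Γᵢ`. -/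
theorem generated_subgroup_inter_le
    (Γ' : Type*) [Group Γ'] (d : Γ' → Γ' → ℝ)
    (hrefl : ∀ γ, d γ γ = 0) (hsep : ∀ γ γ'', d γ γ'' = 0 → γ = γ'')
    (hsymm : ∀ γ γ'', d γ γ'' = d γ'' γ)
    (htri : ∀ γ₁ γ₂ γ₃, d γ₁ γ₃ ≤ d γ₁ γ₂ + d γ₂ γ₃)
    (hinv : ∀ γ γ₁ γ₂, d (γ * γ₁) (γ * γ₂) = d γ₁ γ₂)
    (hballs : ∀ R : ℝ, {g : Γ' | d 1 g ≤ R}.Finite)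
    (Γ : Subgroup Γ') (hnormal : Γ.Normal)
    (H : Subgroup Γ') [Finite H] (k : ℕ) (hk : Nat.card H ≤ k)
    (r : ℝ) (hr : 0 < r)
    (Γi : Subgroup Γ') (hΓi : Γi ≤ Γ)
    (hball : {g : Γ' | d 1 g < 2 * (k + 1) * r} ∩ (Γ : Set Γ') ⊆ (Γi : Set Γ'))
    (ZH : Subgroup Γ')
    (hZH : ZH = Subgroup.closure ({g : Γ' | d 1 g < r} ∩ ((H ⊔ Γ : Subgroup Γ') : Set Γ'))) :
    (ZH : Set Γ') ∩ (Γ : Set Γ') ⊆ (Γi : Set Γ') :=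
  generated_subgroup_inter_le_general Γ' d hrefl hsymm htri hinv Γ hnormal H k hk r hr Γi hball ZH
    hZH
end

section
/- Every finitely generated abelian group, with any proper left-invariant metric, has finite asymptotic dimension, namely asymptotic dimension at most its torsion-free rank. -/
namespace AsdimAux

noncomputable def Mx {n : ℕ} (y : Fin n → ℝ) : ℝ := Finset.univ.fold max 0 y
noncomputable def mn {n : ℕ} (y : Fin n → ℝ) : ℝ := Finset.univ.fold min 0 y
noncomputable def gnorm {n : ℕ} (y : Fin n → ℝ) : ℝ := Mx y - mn y

lemma Mx_nonneg {n : ℕ} (y : Fin n → ℝ) : 0 ≤ Mx y :=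
  (Finset.le_fold_max _).mpr (Or.inl le_rfl)
lemma le_Mx {n : ℕ} (y : Fin n → ℝ) (i : Fin n) : y i ≤ Mx y :=
  (Finset.le_fold_max _).mpr (Or.inr ⟨i, Finset.mem_univ i, le_rfl⟩)
lemma Mx_le {n : ℕ} {y : Fin n → ℝ} {c : ℝ} (h0 : 0 ≤ c) (h : ∀ i, y i ≤ c) : Mx y ≤ c :=
  (Finset.fold_max_le _).mpr ⟨h0, fun i _ => h i⟩
lemma mn_nonpos {n : ℕ} (y : Fin n → ℝ) : mn y ≤ 0 :=
  (Finset.fold_min_le _).mpr (Or.inl le_rfl)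
lemma mn_le {n : ℕ} (y : Fin n → ℝ) (i : Fin n) : mn y ≤ y i :=
  (Finset.fold_min_le _).mpr (Or.inr ⟨i, Finset.mem_univ i, le_rfl⟩)
lemma le_mn {n : ℕ} {y : Fin n → ℝ} {c : ℝ} (h0 : c ≤ 0) (h : ∀ i, c ≤ y i) : c ≤ mn y :=
  (Finset.le_fold_min _).mpr ⟨h0, fun i _ => h i⟩

lemma abs_le_gnorm {n : ℕ} (y : Fin n → ℝ) (i : Fin n) : |y i| ≤ gnorm y := by
  have h1 := le_Mx y i; have h2 := mn_le y i
  have h3 := Mx_nonneg y; have h4 := mn_nonpos y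
  rw [abs_le]; unfold gnorm; constructor <;> linarith

lemma gnorm_le {n : ℕ} {y : Fin n → ℝ} {a b : ℝ} (ha : 0 ≤ a) (hb : b ≤ 0)
    (h1 : ∀ i, y i ≤ a) (h2 : ∀ i, b ≤ y i) : gnorm y ≤ a - b := by
  have := Mx_le ha h1; have := le_mn hb h2; unfold gnorm; linarith

lemma gnorm_add {n : ℕ} (y z : Fin n → ℝ) :
    gnorm (fun i => y i + z i) ≤ gnorm y + gnorm z := by
  have h1 : Mx (fun i => y i + z i) ≤ Mx y + Mx z :=
    Mx_le (add_nonneg (Mx_nonneg y) (Mx_nonneg z)) (fun i => add_le_add (le_Mx y i) (le_Mx z i))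
  have h2 : mn y + mn z ≤ mn (fun i => y i + z i) :=
    le_mn (add_nonpos (mn_nonpos y) (mn_nonpos z)) (fun i => add_le_add (mn_le y i) (mn_le z i))
  unfold gnorm; linarith

/-- Multiplicity bound: at most `n+1` grid points `v` have `gnorm (x - v) < 1`. -/
lemma mult_bound {n : ℕ} (x : Fin n → ℝ) :
    {v : Fin n → ℤ | gnorm (fun i => x i - (v i : ℝ)) < 1}.Finite ∧
    {v : Fin n → ℤ | gnorm (fun i => x i - (v i : ℝ)) < 1}.ncard ≤ n + 1 := by
  classical
  set V := {v : Fin n → ℤ | gnorm (fun i => x i - (v i : ℝ)) < 1} with hVdef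
  have hM : ∀ v ∈ V, ∀ i, x i - (v i : ℝ) < 1 ∧ (-1 : ℝ) < x i - (v i : ℝ) := by
    intro v hv i
    have h1 := le_Mx (fun i => x i - (v i : ℝ)) i
    have h2 := mn_le (fun i => x i - (v i : ℝ)) i
    have h3 := Mx_nonneg (fun i => x i - (v i : ℝ))
    have h4 := mn_nonpos (fun i => x i - (v i : ℝ))
    have hv' : gnorm (fun i => x i - (v i : ℝ)) < 1 := hv
    unfold gnorm at hv'
    constructor <;> linarith
  have hfloor : ∀ v ∈ V, ∀ i, v i = ⌊x i⌋ ∨ v i = ⌊x i⌋ + 1 := by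
    intro v hv i
    obtain ⟨h1, h2⟩ := hM v hv i
    have hf1 : (⌊x i⌋ : ℝ) ≤ x i := Int.floor_le _
    have hf2 : x i < ⌊x i⌋ + 1 := Int.lt_floor_add_one _
    have hlo : ⌊x i⌋ ≤ v i := by
      by_contra h
      push_neg at h
      have : ((v i : ℤ) : ℝ) ≤ (⌊x i⌋ : ℝ) - 1 := by
        have : v i ≤ ⌊x i⌋ - 1 := by omega
        exact_mod_cast this
      linarith
    have hhi : v i ≤ ⌊x i⌋ + 1 := by
      by_contra h
      push_neg at h
      have : ((⌊x i⌋ : ℝ) + 2) ≤ (v i : ℝ) := by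
        have : ⌊x i⌋ + 2 ≤ v i := by omega
        exact_mod_cast this
      linarith
    omega
  set Sv : (Fin n → ℤ) → Finset (Fin n) := fun v => Finset.univ.filter (fun i => v i = ⌊x i⌋ + 1)
    with hSvdef
  have hcmp : ∀ v ∈ V, ∀ i j : Fin n, v i = ⌊x i⌋ + 1 → v j = ⌊x j⌋ →
      x j - (⌊x j⌋ : ℝ) < x i - (⌊x i⌋ : ℝ) := by
    intro v hv i j hi hj
    have h1 := le_Mx (fun i => x i - (v i : ℝ)) j
    have h2 := mn_le (fun i => x i - (v i : ℝ)) i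
    have hv' : gnorm (fun i => x i - (v i : ℝ)) < 1 := hv
    unfold gnorm at hv'
    rw [hi] at h2
    rw [hj] at h1
    push_cast at h1 h2
    linarith
  have hmem : ∀ v : Fin n → ℤ, ∀ i, i ∈ Sv v ↔ v i = ⌊x i⌋ + 1 := by
    intro v i; simp [hSvdef]
  have hchain : ∀ v ∈ V, ∀ w ∈ V, Sv v ⊆ Sv w ∨ Sv w ⊆ Sv v := by
    intro v hv w hw
    by_contra h
    push_neg at h
    obtain ⟨hnvw, hnwv⟩ := h
    obtain ⟨i, hiv, hiw⟩ := Finset.not_subset.mp hnvw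
    obtain ⟨j, hjw, hjv⟩ := Finset.not_subset.mp hnwv
    have hvi : v i = ⌊x i⌋ + 1 := (hmem v i).mp hiv
    have hwi : w i = ⌊x i⌋ := by
      rcases hfloor w hw i with h' | h'
      · exact h'
      · exact absurd ((hmem w i).mpr h') hiw
    have hwj : w j = ⌊x j⌋ + 1 := (hmem w j).mp hjw
    have hvj : v j = ⌊x j⌋ := by
      rcases hfloor v hv j with h' | h'
      · exact h'
      · exact absurd ((hmem v j).mpr h') hjv
    have c1 := hcmp v hv i j hvi hvj
    have c2 := hcmp w hw j i hwj hwi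
    linarith
  have hSv_eq : ∀ v ∈ V, ∀ w ∈ V, Sv v = Sv w → v = w := by
    intro v hv w hw hS
    funext i
    rcases hfloor v hv i with h1 | h1 <;> rcases hfloor w hw i with h2 | h2
    · rw [h1, h2]
    · exfalso
      have : i ∈ Sv v := hS ▸ (hmem w i).mpr h2
      rw [hmem v i] at this; omega
    · exfalso
      have : i ∈ Sv w := hS ▸ (hmem v i).mpr h1
      rw [hmem w i] at this; omega
    · rw [h1, h2]
  have hinj : V.InjOn (fun v => (Sv v).card) := by
    intro v hv w hw hcard
    simp only at hcard
    apply hSv_eq v hv w hw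
    rcases hchain v hv w hw with h | h
    · exact Finset.eq_of_subset_of_card_le h (le_of_eq hcard.symm)
    · exact (Finset.eq_of_subset_of_card_le h (le_of_eq hcard)).symm
  have himg : (fun v => (Sv v).card) '' V ⊆ ↑(Finset.range (n + 1)) := by
    rintro _ ⟨v, _, rfl⟩
    simp only [Finset.coe_range, Set.mem_Iio]
    have : (Sv v).card ≤ Fintype.card (Fin n) := Finset.card_le_card (Finset.subset_univ _) |>.trans
      (by simp)
    simp at this
    omega
  have hfin : V.Finite :=
    Set.Finite.of_finite_image (Set.Finite.subset (Finset.range (n + 1)).finite_toSet himg) hinj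
  refine ⟨hfin, ?_⟩
  calc V.ncard = ((fun v => (Sv v).card) '' V).ncard := (Set.ncard_image_of_injOn hinj).symm
    _ ≤ (↑(Finset.range (n + 1)) : Set ℕ).ncard :=
        Set.ncard_le_ncard himg (Finset.range (n + 1)).finite_toSet
    _ = n + 1 := by rw [Set.ncard_coe_finset, Finset.card_range]

/-- Lebesgue center: every point is within `n/(n+1)` (in `gnorm`) of a grid point. -/
lemma lebesgue_center {n : ℕ} (x : Fin n → ℝ) :
    ∃ v : Fin n → ℤ, gnorm (fun i => x i - (v i : ℝ)) ≤ (n : ℝ) / (n + 1) := by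
  classical
  set c : Fin n → ℤ := fun i => ⌈Int.fract (x i) * (n + 1)⌉ with hcdef
  -- pigeonhole: some k in 0..n has k+1 not in the image of c
  have hpig : ∃ k ∈ Finset.range (n + 1), ∀ i, c i ≠ (k : ℤ) + 1 := by
    by_contra h
    push_neg at h
    have h' : ∀ k : ℕ, ∃ i : Fin n, (k ∈ Finset.range (n + 1) → c i = (k : ℤ) + 1) := by
      intro k
      by_cases hk : k ∈ Finset.range (n + 1)
      · obtain ⟨i, hi⟩ := h k hk
        exact ⟨i, fun _ => hi⟩
      · obtain ⟨i, hi⟩ := h 0 (Finset.mem_range.mpr (by omega))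
        exact ⟨i, fun hk' => absurd hk' hk⟩
    choose g hg using h'
    have hcard : (Finset.univ : Finset (Fin n)).card < (Finset.range (n + 1)).card := by
      simp
    obtain ⟨k1, hk1, k2, hk2, hne, heq⟩ :=
      Finset.exists_ne_map_eq_of_card_lt_of_maps_to hcard (fun k _ => Finset.mem_univ (g k))
    have e1 := hg k1 hk1
    have e2 := hg k2 hk2
    rw [heq] at e1
    rw [e2] at e1
    exact hne (by omega)
  obtain ⟨k, hk, hknot⟩ := hpig
  rw [Finset.mem_range] at hk
  have hn1 : (0 : ℝ) < (n : ℝ) + 1 := by positivity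
  set t : ℝ := ((k : ℝ) + 1) / ((n : ℝ) + 1) with htdef
  set a : ℝ := (k : ℝ) / ((n : ℝ) + 1) with hadef
  have ha0 : 0 ≤ a := by positivity
  have ht1 : t ≤ 1 := by
    rw [htdef, div_le_one hn1]
    have : (k : ℝ) ≤ (n : ℝ) := by exact_mod_cast Nat.le_of_lt_succ hk
    linarith
  refine ⟨fun i => ⌊x i⌋ + (if t < Int.fract (x i) then 1 else 0), ?_⟩
  have key : ∀ i, x i - ((⌊x i⌋ + (if t < Int.fract (x i) then 1 else 0) : ℤ) : ℝ) ≤ a ∧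
      t - 1 ≤ x i - ((⌊x i⌋ + (if t < Int.fract (x i) then 1 else 0) : ℤ) : ℝ) := by
    intro i
    have hfr0 : 0 ≤ Int.fract (x i) := Int.fract_nonneg _
    have hfr1 : Int.fract (x i) < 1 := Int.fract_lt_one _
    have hfr : Int.fract (x i) = x i - (⌊x i⌋ : ℝ) := (Int.self_sub_floor (x i)).symm
    by_cases hcase : t < Int.fract (x i)
    · simp only [hcase, if_true]
      push_cast
      constructor <;> linarith
    · simp only [hcase, if_false]
      push_neg at hcase
      have hfa : Int.fract (x i) ≤ a := by
        by_contra hgt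
        push_neg at hgt
        apply hknot i
        rw [hcdef]
        simp only
        rw [Int.ceil_eq_iff]
        rw [hadef, div_lt_iff₀ hn1] at hgt
        rw [htdef, le_div_iff₀ hn1] at hcase
        constructor
        · push_cast
          linarith
        · push_cast
          linarith
      push_cast
      constructor <;> linarith
  have := gnorm_le (y := fun i => x i - (((fun i => ⌊x i⌋ + (if t < Int.fract (x i) then 1 else 0)) i : ℤ) : ℝ))
    ha0 (by linarith) (fun i => (key i).1) (fun i => (key i).2)
  have harith : a - (t - 1) = (n : ℝ) / ((n : ℝ) + 1) := by
    rw [hadef, htdef]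
    field_simp
    ring
  calc gnorm (fun i => x i - _) ≤ a - (t - 1) := this
    _ = (n : ℝ) / (n + 1) := harith

end AsdimAux

open AsdimAux in
/-- formalizable fragment of "abelian groups have strong fqFDC": every
finitely generated abelian group `A` (so `A ≅ ℤⁿ × F` with `F` finite, `n` the torsion-free
rank), equipped with any proper left-invariant metric, has finite asymptotic dimension,
namely asymptotic dimension at most `n`. -/
theorem fg_abelian_asdim_le_rank
    (A : Type*) [AddCommGroup A] (n : ℕ) (F : Type*) [AddCommGroup F] [Finite F]
    (e : A ≃+ (Fin n → ℤ) × F)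
    (d : A → A → ℝ)
    (hrefl : ∀ a, d a a = 0) (hsep : ∀ a b, d a b = 0 → a = b)
    (hsymm : ∀ a b, d a b = d b a)
    (htri : ∀ a b c, d a c ≤ d a b + d b c)
    (hinv : ∀ a x y : A, d (a + x) (a + y) = d x y)
    (hproper : ∀ R : ℝ, {a : A | d 0 a ≤ R}.Finite) :
    AsdimCoverLE d n := by
  classical
  intro R hR
  have hd0 : ∀ a b : A, d a b = d 0 (b - a) := by
    intro a b
    have h := hinv a 0 (b - a)
    have h2 : a + (b - a) = b := by abel
    rw [add_zero, h2] at h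
    exact h
  -- coordinates of points at `d`-distance ≤ R from 0 are bounded by some S
  obtain ⟨S, hS0, hS⟩ : ∃ S : ℝ, 0 ≤ S ∧
      ∀ c : A, d 0 c ≤ R → ∀ i, |((e c).1 i : ℝ)| ≤ S := by
    have hT : {a : A | d 0 a ≤ R}.Finite := hproper R
    set J : Set ℝ := (fun p : A × Fin n => |((e p.1).1 p.2 : ℝ)|) '' ({a : A | d 0 a ≤ R} ×ˢ Set.univ)
      with hJdef
    have hJ : J.Finite := Set.Finite.image _ (hT.prod Set.finite_univ)
    refine ⟨sSup (insert 0 J), le_csSup (hJ.insert 0).bddAbove (Set.mem_insert 0 J), ?_⟩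
    intro c hc i
    exact le_csSup (hJ.insert 0).bddAbove (Set.mem_insert_of_mem _ ⟨(c, i), ⟨hc, trivial⟩, rfl⟩)
  set L : ℝ := 2 * S * (n + 1) + 1 with hLdef
  have hL : 0 < L := by positivity
  set ψ : A → Fin n → ℝ := fun a i => ((e a).1 i : ℝ) / L with hψdef
  set u : (Fin n → ℤ) → Set A :=
    fun v => {a : A | gnorm (fun i => ψ a i - (v i : ℝ)) < 1} with hudef
  have hsubcoord : ∀ a b : A, ∀ i, ((e (b - a)).1 i : ℝ) = (e b).1 i - (e a).1 i := by
    intro a b i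
    rw [map_sub]
    push_cast [Prod.fst_sub, Pi.sub_apply]
    ring
  refine ⟨Set.range u, ?_, ?_, ?_⟩
  · -- uniform boundedness
    obtain ⟨B, hB⟩ : ∃ B : ℝ, ∀ c : A, (∀ i, |((e c).1 i : ℝ)| ≤ 2 * L) → d 0 c ≤ B := by
      set box : Set (Fin n → ℤ) := Set.pi Set.univ (fun _ => Set.Icc (-⌈2 * L⌉) ⌈2 * L⌉) with hbox
      have hboxfin : box.Finite := Set.Finite.pi (fun _ => Set.finite_Icc _ _)
      have hT : {c : A | ∀ i, |((e c).1 i : ℝ)| ≤ 2 * L}.Finite := by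
        apply Set.Finite.subset (Set.Finite.preimage e.injective.injOn
          (hboxfin.prod Set.finite_univ))
        intro c hc
        simp only [Set.mem_preimage, Set.mem_prod]
        refine ⟨fun i _ => ?_, trivial⟩
        have h := abs_le.mp (hc i)
        constructor
        · have h1 : (-⌈2 * L⌉ : ℝ) ≤ ((e c).1 i : ℝ) := by
            have := Int.le_ceil (2 * L)
            push_cast
            linarith [h.1]
          exact_mod_cast h1
        · have h2 : ((e c).1 i : ℝ) ≤ (⌈2 * L⌉ : ℝ) := le_trans h.2 (Int.le_ceil _)
          exact_mod_cast h2
      exact ⟨sSup ((fun c => d 0 c) '' {c : A | ∀ i, |((e c).1 i : ℝ)| ≤ 2 * L}),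
        fun c hc => le_csSup ((hT.image _).bddAbove) ⟨c, hc, rfl⟩⟩
    refine ⟨B, ?_⟩
    rintro w ⟨v, rfl⟩ a ha b hb
    rw [hd0 a b]
    apply hB
    intro i
    have ha0 : gnorm (fun i => ψ a i - (v i : ℝ)) < 1 := ha
    have hb0 : gnorm (fun i => ψ b i - (v i : ℝ)) < 1 := hb
    have ha' : |ψ a i - (v i : ℝ)| ≤ 1 :=
      le_of_lt (lt_of_le_of_lt (abs_le_gnorm (fun i => ψ a i - (v i : ℝ)) i) ha0)
    have hb' : |ψ b i - (v i : ℝ)| ≤ 1 :=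
      le_of_lt (lt_of_le_of_lt (abs_le_gnorm (fun i => ψ b i - (v i : ℝ)) i) hb0)
    have hdiff : ((e (b - a)).1 i : ℝ) = (ψ b i - ψ a i) * L := by
      rw [hsubcoord a b i, hψdef]
      field_simp
    rw [hdiff, abs_mul, abs_of_pos hL]
    have htri2 : |ψ b i - ψ a i| ≤ 2 := by
      calc |ψ b i - ψ a i| ≤ |ψ b i - (v i : ℝ)| + |(v i : ℝ) - ψ a i| := abs_sub_le _ _ _
        _ ≤ 1 + 1 := add_le_add hb' (by rwa [abs_sub_comm])
        _ = 2 := by norm_num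
    nlinarith
  · -- Lebesgue number
    intro a
    obtain ⟨v, hv⟩ := lebesgue_center (ψ a)
    refine ⟨u v, ⟨v, rfl⟩, ?_⟩
    intro y hy
    have hdy : d 0 (y - a) ≤ R := by rw [← hd0]; exact le_of_lt hy
    have hcoord : ∀ i, |ψ y i - ψ a i| ≤ S / L := by
      intro i
      have h := hS _ hdy i
      rw [hsubcoord a y i] at h
      have : ψ y i - ψ a i = ((e y).1 i - (e a).1 i) / L := by
        rw [hψdef]; field_simp
      rw [this, abs_div, abs_of_pos hL]
      exact div_le_div_of_nonneg_right h hL.le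
    have h1 : gnorm (fun i => ψ y i - ψ a i) ≤ S / L - (-(S / L)) := by
      apply gnorm_le (by positivity) (by simp; positivity)
      · exact fun i => (abs_le.mp (hcoord i)).2
      · exact fun i => (abs_le.mp (hcoord i)).1
    have htr : gnorm (fun i => ψ y i - (v i : ℝ)) ≤ (S / L - (-(S / L))) + (n : ℝ) / (n + 1) := by
      have heq : (fun i => ψ y i - (v i : ℝ)) =
          fun i => (ψ y i - ψ a i) + (ψ a i - (v i : ℝ)) := by
        funext i; ring
      rw [heq]
      exact le_trans (gnorm_add _ _) (add_le_add h1 hv)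
    have hn1 : (0 : ℝ) < (n : ℝ) + 1 := by positivity
    have harith : (S / L - (-(S / L))) + (n : ℝ) / (n + 1) < 1 := by
      have h2 : S / L - (-(S / L)) = (2 * S) / L := by ring
      have h3 : (2 * S) / L < 1 / ((n : ℝ) + 1) := by
        rw [div_lt_div_iff₀ hL hn1]
        rw [hLdef]
        nlinarith
      have h4 : (n : ℝ) / (n + 1) = 1 - 1 / (n + 1) := by field_simp; ring
      linarith
    show gnorm (fun i => ψ y i - (v i : ℝ)) < 1
    linarith
  · -- multiplicity
    intro a
    obtain ⟨hfin, hcard⟩ := mult_bound (ψ a)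
    set V := {v : Fin n → ℤ | gnorm (fun i => ψ a i - (v i : ℝ)) < 1} with hVdef
    have hsub : {w | w ∈ Set.range u ∧ a ∈ w} ⊆ u '' V := by
      rintro w ⟨⟨v, rfl⟩, hw⟩
      exact ⟨v, hw, rfl⟩
    have hfin' : (u '' V).Finite := hfin.image u
    exact ⟨hfin'.subset hsub,
      le_trans (Set.ncard_le_ncard hsub hfin')
        (le_trans (Set.ncard_image_le hfin) hcard)⟩
end
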